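/- Let Γ be a subset of SL(2,ℝ)×SL(2,ℝ) with ε_Γ > 0. Then for every non-central γ = (γ₁,γ₂) ∈ Γ and every x ∈ SL(2,ℝ) with ‖x‖ ≤ ε_Γ, one has ‖γ₁ x γ₂⁻¹‖ > ε_Γ (i.e., γ·B(ε_Γ) ∩ B(ε_Γ) = ∅ for the pseudo-ball B(ε_Γ) = {y : ‖y‖ ≤ ε_Γ}). -/
import Mathlib


open Real

noncomputable section

abbrev SL2 := Matrix.SpecialLinearGroup (Fin 2) ℝ

/-- inverse hyperbolic cosine -/
def acosh (x : ℝ) : ℝ := Real.log (x + Real.sqrt (x ^ 2 - 1))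

/-- the "pseudo-distance from the origin" ‖g‖ = arcosh((g₁₁²+g₁₂²+g₂₁²+g₂₂²)/2) -/
def gnorm (g : SL2) : ℝ :=
  acosh ((g.1 0 0 ^ 2 + g.1 0 1 ^ 2 + g.1 1 0 ^ 2 + g.1 1 1 ^ 2) / 2)

def z1 (x : SL2) : ℂ :=
  (((x.1 0 0 + x.1 1 1 : ℝ) : ℂ) + Complex.I * ((x.1 1 0 - x.1 0 1 : ℝ) : ℂ)) / 2

def z2 (x : SL2) : ℂ :=
  (((x.1 0 1 + x.1 1 0 : ℝ) : ℂ) + Complex.I * ((x.1 0 0 - x.1 1 1 : ℝ) : ℂ)) / 2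

/-- the spherical function ψ_{m,k}(x) = z₁(x)^{-(k+2m)} z₂(x)^k -/
def psi (m k : ℕ) (x : SL2) : ℂ := z1 x ^ (-(k + 2 * m : ℤ)) * z2 x ^ k

/-- γ is central iff both components are ±1 -/
def IsCentral (γ : SL2 × SL2) : Prop :=
  (γ.1.1 = 1 ∨ γ.1.1 = -1) ∧ (γ.2.1 = 1 ∨ γ.2.1 = -1)

/-- ε_Γ -/
def epsGamma (Γ : Set (SL2 × SL2)) : ℝ :=
  (1 / 3) * sInf {r | ∃ γ ∈ Γ, ¬IsCentral γ ∧ r = |gnorm γ.1 - gnorm γ.2|}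

/-- the set counted by N_Γ(x,R) -/
def orbitSet (Γ : Set (SL2 × SL2)) (x : SL2) (R : ℝ) : Set (SL2 × SL2) :=
  {γ | γ ∈ Γ ∧ gnorm (γ.1 * x * γ.2⁻¹) ≤ R}

/-- the constant m(C,α,ε,s) -/
def mConst (C α ε : ℝ) (s : ℕ) : ℝ :=
  (Real.log 2 * s + 2 * α * ε + Real.log (1 + 2 ^ s * C * Real.exp (6 * α * ε))) /
    Real.log (Real.cosh ε)

def chi (x : ℝ) : ℝ := if x = 1 then 0 else 1

/-- θ_{a,N} for a tuple a of length k (with the convention a_{-1} = 1) -/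
def thetaAN (a : ℕ → ℝ) (k : ℕ) (N : ℝ) : ℝ :=
  Real.pi * ∑ i ∈ Finset.range k,
    (chi (a i) - if i = 0 then 0 else chi (a (i - 1))) * N ^ (-(i : ℤ))

/-- the sign tuple a(b) attached to b -/
def signOf (b : ℕ → ℝ) (j : ℕ) : ℝ := if 0 ≤ b j then 1 else -1

/-- ψ_{m,b} = Σ_{j<k} b_j ψ_{m,3^j} -/
def psiB (m k : ℕ) (b : ℕ → ℝ) (x : SL2) : ℂ :=
  ∑ j ∈ Finset.range k, (b j : ℂ) * psi m (3 ^ j) x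

/-- f_b(u) = Σ_{j<k} b_j cos(3^j θ_{a(b),3}) u^{3^j} -/
def fb (k : ℕ) (b : ℕ → ℝ) (u : ℝ) : ℝ :=
  ∑ j ∈ Finset.range k, b j * Real.cos (3 ^ j * thetaAN (signOf b) k 3) * u ^ 3 ^ j

/-- the rotation matrix k(θ) -/
def kMat (θ : ℝ) : SL2 :=
  ⟨!![Real.cos θ, -Real.sin θ; Real.sin θ, Real.cos θ], by
    simp [Matrix.det_fin_two_of]
    nlinarith [Real.sin_sq_add_cos_sq θ]⟩

/-- the diagonal matrix a(t) -/
def aMat (t : ℝ) : SL2 :=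
  ⟨!![Real.exp t, 0; 0, Real.exp (-t)], by
    simp [Matrix.det_fin_two_of, ← Real.exp_add]⟩

end

noncomputable section Aux

open Real

lemma my_acosh_nonneg {x : ℝ} (hx : 1 ≤ x) : 0 ≤ acosh x := by
  apply Real.log_nonneg
  have := Real.sqrt_nonneg (x ^ 2 - 1)
  linarith

lemma my_acosh_mono {x y : ℝ} (hx : 1 ≤ x) (hxy : x ≤ y) : acosh x ≤ acosh y := by
  apply Real.log_le_log (by have := Real.sqrt_nonneg (x ^ 2 - 1); linarith)
  have h : Real.sqrt (x ^ 2 - 1) ≤ Real.sqrt (y ^ 2 - 1) :=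
    Real.sqrt_le_sqrt (by nlinarith)
  linarith

lemma my_cosh_acosh {x : ℝ} (hx : 1 ≤ x) : Real.cosh (acosh x) = x := by
  have hs : Real.sqrt (x ^ 2 - 1) ^ 2 = x ^ 2 - 1 := Real.sq_sqrt (by nlinarith)
  have hs0 : 0 ≤ Real.sqrt (x ^ 2 - 1) := Real.sqrt_nonneg _
  have ht : 0 < x + Real.sqrt (x ^ 2 - 1) := by linarith
  have hinv : (x + Real.sqrt (x ^ 2 - 1))⁻¹ = x - Real.sqrt (x ^ 2 - 1) :=
    inv_eq_of_mul_eq_one_left (by nlinarith)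
  rw [acosh, Real.cosh_eq, Real.exp_log ht, ← Real.log_inv, Real.exp_log (by positivity), hinv]
  ring

lemma my_sinh_acosh {x : ℝ} (hx : 1 ≤ x) : Real.sinh (acosh x) = Real.sqrt (x ^ 2 - 1) := by
  have hs : Real.sqrt (x ^ 2 - 1) ^ 2 = x ^ 2 - 1 := Real.sq_sqrt (by nlinarith)
  have hs0 : 0 ≤ Real.sqrt (x ^ 2 - 1) := Real.sqrt_nonneg _
  have ht : 0 < x + Real.sqrt (x ^ 2 - 1) := by linarith
  have hinv : (x + Real.sqrt (x ^ 2 - 1))⁻¹ = x - Real.sqrt (x ^ 2 - 1) :=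
    inv_eq_of_mul_eq_one_left (by nlinarith)
  rw [acosh, Real.sinh_eq, Real.exp_log ht, ← Real.log_inv, Real.exp_log (by positivity), hinv]
  ring

lemma my_acosh_cosh {s : ℝ} (hs : 0 ≤ s) : acosh (Real.cosh s) = s := by
  have h1 : Real.cosh s ^ 2 - 1 = Real.sinh s ^ 2 := by
    have := Real.cosh_sq_sub_sinh_sq s; linarith
  rw [acosh, h1, Real.sqrt_sq (by exact Real.sinh_nonneg_iff.mpr hs), Real.cosh_add_sinh,
    Real.log_exp]

def qval (g : SL2) : ℝ := (g.1 0 0 ^ 2 + g.1 0 1 ^ 2 + g.1 1 0 ^ 2 + g.1 1 1 ^ 2) / 2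

lemma gnorm_eq (g : SL2) : gnorm g = acosh (qval g) := rfl

lemma det_entries (g : SL2) : g.1 0 0 * g.1 1 1 - g.1 0 1 * g.1 1 0 = 1 := by
  have h := g.2
  rw [Matrix.det_fin_two] at h
  linarith

lemma one_le_qval (g : SL2) : 1 ≤ qval g := by
  have h := det_entries g
  unfold qval
  nlinarith [sq_nonneg (g.1 0 0 - g.1 1 1), sq_nonneg (g.1 0 1 + g.1 1 0)]

lemma cauchy2 {X Y U V s t : ℝ} (hs : 0 ≤ s) (ht : 0 ≤ t)
    (hs2 : X ^ 2 + Y ^ 2 = s ^ 2) (ht2 : U ^ 2 + V ^ 2 = t ^ 2) :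
    X * U + Y * V ≤ s * t := by
  nlinarith [sq_nonneg (X * V - Y * U), sq_nonneg (X * U + Y * V - s * t),
    sq_nonneg (X * U + Y * V + s * t), mul_nonneg hs ht]

lemma key_ineq (a b c d e f g h sA sB : ℝ)
    (hdA : a * d - b * c = 1) (hdB : e * h - f * g = 1)
    (hsA0 : 0 ≤ sA) (hsB0 : 0 ≤ sB)
    (hsA2 : sA ^ 2 = ((a ^ 2 + b ^ 2 + c ^ 2 + d ^ 2) / 2) ^ 2 - 1)
    (hsB2 : sB ^ 2 = ((e ^ 2 + f ^ 2 + g ^ 2 + h ^ 2) / 2) ^ 2 - 1) :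
    ((a * e + b * g) ^ 2 + (a * f + b * h) ^ 2 + (c * e + d * g) ^ 2 + (c * f + d * h) ^ 2) / 2
    ≤ ((a ^ 2 + b ^ 2 + c ^ 2 + d ^ 2) / 2) * ((e ^ 2 + f ^ 2 + g ^ 2 + h ^ 2) / 2)
      + sA * sB := by
  have hX : ((a ^ 2 + c ^ 2) - (b ^ 2 + d ^ 2)) ^ 2 + (2 * (a * b + c * d)) ^ 2
      = (2 * sA) ^ 2 := by
    linear_combination -4 * hsA2 - 4 * (a * d - b * c + 1) * hdA
  have hU : ((e ^ 2 + f ^ 2) - (g ^ 2 + h ^ 2)) ^ 2 + (2 * (e * g + f * h)) ^ 2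
      = (2 * sB) ^ 2 := by
    linear_combination -4 * hsB2 - 4 * (e * h - f * g + 1) * hdB
  have hcs := cauchy2 (by linarith : (0:ℝ) ≤ 2 * sA) (by linarith : (0:ℝ) ≤ 2 * sB) hX hU
  nlinarith [hcs]

lemma mul_entry (A B : SL2) (i j : Fin 2) :
    (A * B).1 i j = A.1 i 0 * B.1 0 j + A.1 i 1 * B.1 1 j := by
  simp [Matrix.SpecialLinearGroup.coe_mul, Matrix.mul_apply, Fin.sum_univ_two]

lemma qval_mul_le (A B : SL2) :
    qval (A * B) ≤ qval A * qval B +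
      Real.sqrt (qval A ^ 2 - 1) * Real.sqrt (qval B ^ 2 - 1) := by
  have hA1 : 1 ≤ qval A := one_le_qval A
  have hB1 : 1 ≤ qval B := one_le_qval B
  have hsA2 : Real.sqrt (qval A ^ 2 - 1) ^ 2 = qval A ^ 2 - 1 :=
    Real.sq_sqrt (by nlinarith)
  have hsB2 : Real.sqrt (qval B ^ 2 - 1) ^ 2 = qval B ^ 2 - 1 :=
    Real.sq_sqrt (by nlinarith)
  have hq : qval (A * B) = ((A.1 0 0 * B.1 0 0 + A.1 0 1 * B.1 1 0) ^ 2
      + (A.1 0 0 * B.1 0 1 + A.1 0 1 * B.1 1 1) ^ 2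
      + (A.1 1 0 * B.1 0 0 + A.1 1 1 * B.1 1 0) ^ 2
      + (A.1 1 0 * B.1 0 1 + A.1 1 1 * B.1 1 1) ^ 2) / 2 := by
    unfold qval
    rw [mul_entry, mul_entry, mul_entry, mul_entry]
  rw [hq]
  exact key_ineq _ _ _ _ _ _ _ _ _ _ (det_entries A) (det_entries B)
    (Real.sqrt_nonneg _) (Real.sqrt_nonneg _) hsA2 hsB2

lemma gnorm_nonneg (g : SL2) : 0 ≤ gnorm g :=
  my_acosh_nonneg (one_le_qval g)

lemma gnorm_mul_le (A B : SL2) : gnorm (A * B) ≤ gnorm A + gnorm B := by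
  have hA1 : 1 ≤ qval A := one_le_qval A
  have hB1 : 1 ≤ qval B := one_le_qval B
  have hcosh : Real.cosh (gnorm A + gnorm B)
      = qval A * qval B + Real.sqrt (qval A ^ 2 - 1) * Real.sqrt (qval B ^ 2 - 1) := by
    rw [Real.cosh_add, gnorm_eq, gnorm_eq, my_cosh_acosh hA1, my_cosh_acosh hB1,
      my_sinh_acosh hA1, my_sinh_acosh hB1]
  have h1 : qval (A * B) ≤ Real.cosh (gnorm A + gnorm B) := by
    rw [hcosh]; exact qval_mul_le A B
  calc gnorm (A * B) = acosh (qval (A * B)) := rfl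
    _ ≤ acosh (Real.cosh (gnorm A + gnorm B)) := my_acosh_mono (one_le_qval _) h1
    _ = gnorm A + gnorm B := my_acosh_cosh (by
        have := gnorm_nonneg A; have := gnorm_nonneg B; linarith)

lemma gnorm_inv (g : SL2) : gnorm g⁻¹ = gnorm g := by
  rw [Matrix.SpecialLinearGroup.SL2_inv_expl g]
  unfold gnorm
  have h : ∀ i j, (⟨![![g.1 1 1, -g.1 0 1], ![-g.1 1 0, g.1 0 0]],
      Matrix.SpecialLinearGroup.SL2_inv_expl_det g⟩ : SL2).1 i j
      = ![![g.1 1 1, -g.1 0 1], ![-g.1 1 0, g.1 0 0]] i j := fun _ _ => rfl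
  rw [h, h, h, h]
  norm_num [Matrix.cons_val_zero, Matrix.cons_val_one, Matrix.head_cons]
  ring_nf
end Aux

theorem stmt12 (Γ : Set (SL2 × SL2)) (hε : 0 < epsGamma Γ) :
    ∀ γ ∈ Γ, ¬IsCentral γ → ∀ x : SL2, gnorm x ≤ epsGamma Γ →
      epsGamma Γ < gnorm (γ.1 * x * γ.2⁻¹) := by
  intro γ hγ hnc x hx
  set S : Set ℝ := {r | ∃ γ ∈ Γ, ¬IsCentral γ ∧ r = |gnorm γ.1 - gnorm γ.2|} with hS
  have hmem : |gnorm γ.1 - gnorm γ.2| ∈ S := ⟨γ, hγ, hnc, rfl⟩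
  have hbdd : BddBelow S := ⟨0, by rintro r ⟨δ, -, -, rfl⟩; exact abs_nonneg _⟩
  have hinf : sInf S ≤ |gnorm γ.1 - gnorm γ.2| := csInf_le hbdd hmem
  have hεS : epsGamma Γ = (1 / 3) * sInf S := rfl
  set y := γ.1 * x * γ.2⁻¹ with hy
  have hy1 : γ.1 = y * γ.2 * x⁻¹ := by rw [hy]; group
  have hy2 : γ.2 = y⁻¹ * γ.1 * x := by rw [hy]; group
  have h1 : gnorm γ.1 ≤ gnorm y + gnorm γ.2 + gnorm x := by
    calc gnorm γ.1 = gnorm (y * γ.2 * x⁻¹) := by rw [← hy1]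
      _ ≤ gnorm (y * γ.2) + gnorm x⁻¹ := gnorm_mul_le _ _
      _ ≤ gnorm y + gnorm γ.2 + gnorm x := by
          rw [gnorm_inv]
          have := gnorm_mul_le y γ.2
          linarith
  have h2 : gnorm γ.2 ≤ gnorm y + gnorm γ.1 + gnorm x := by
    calc gnorm γ.2 = gnorm (y⁻¹ * γ.1 * x) := by rw [← hy2]
      _ ≤ gnorm (y⁻¹ * γ.1) + gnorm x := gnorm_mul_le _ _
      _ ≤ gnorm y + gnorm γ.1 + gnorm x := by
          have := gnorm_mul_le y⁻¹ γ.1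
          rw [gnorm_inv] at this
          linarith
  have habs : |gnorm γ.1 - gnorm γ.2| ≤ gnorm y + gnorm x :=
    abs_sub_le_iff.mpr ⟨by linarith, by linarith⟩
  linarith
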